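/- There is a constant C such that for every w ∈ C²(ℝ_+×ℝ³), every t ≥ 0 and x ∈ ℝ³: ⟨t−r⟩ |∂_t² w(t,x)| ≤ C Σ_{|α|≤1} |∂ Γ^α w(t,x)| + C t |□w(t,x)|. -/

import Mathlib

open MeasureTheory

noncomputable section

/-- The partial derivative in the `i`-th coordinate direction on `ℝⁿ`. -/
def pd {n : ℕ} (i : Fin n) (u : (Fin n → ℝ) → ℝ) : (Fin n → ℝ) → ℝ :=
  fun z => fderiv ℝ u z (Pi.single i 1)

/-- Iterated application of a family of first-order operators along a list of indices. -/
def opIter {α γ : Type*} (F : α → γ → γ) : List α → γ → γ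
  | [] => id
  | i :: L => fun u => F i (opIter F L u)

/-- The ten vector fields Γ on ℝ×ℝ³ (coordinates: `0 = t`, `1,2,3 = x`):
`∂_t, ∂_{x₁}, ∂_{x₂}, ∂_{x₃}`, the rotations `Ω_{jk} = x_j∂_k - x_k∂_j` (`1 ≤ j < k ≤ 3`)
and the boosts `Ω_{0k} = x_k∂_t + t∂_k` (`k = 1,2,3`). -/
def GammaField (i : Fin 10) (u : (Fin 4 → ℝ) → ℝ) : (Fin 4 → ℝ) → ℝ :=
  if i.val = 0 then pd 0 u
  else if i.val = 1 then pd 1 u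
  else if i.val = 2 then pd 2 u
  else if i.val = 3 then pd 3 u
  else if i.val = 4 then fun z => z 1 * pd 2 u z - z 2 * pd 1 u z
  else if i.val = 5 then fun z => z 1 * pd 3 u z - z 3 * pd 1 u z
  else if i.val = 6 then fun z => z 2 * pd 3 u z - z 3 * pd 2 u z
  else if i.val = 7 then fun z => z 1 * pd 0 u z + z 0 * pd 1 u z
  else if i.val = 8 then fun z => z 2 * pd 0 u z + z 0 * pd 2 u z
  else fun z => z 3 * pd 0 u z + z 0 * pd 3 u z

/-- The spatial radius `r = |x|` of a space-time point. -/
def rad (z : Fin 4 → ℝ) : ℝ := Real.sqrt ((z 1)^2 + (z 2)^2 + (z 3)^2)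

/-- The d'Alembertian `□ = ∂_t² - Δ` on ℝ×ℝ³. -/
def Box (u : (Fin 4 → ℝ) → ℝ) : (Fin 4 → ℝ) → ℝ :=
  fun z => pd 0 (pd 0 u) z - pd 1 (pd 1 u) z - pd 2 (pd 2 u) z - pd 3 (pd 3 u) z

/-- The `L²` norm in `x ∈ ℝ³` at fixed time `t`. -/
def L2x (f : (Fin 4 → ℝ) → ℝ) (t : ℝ) : ℝ :=
  Real.sqrt (∫ x : Fin 3 → ℝ, (f (Fin.cons t x))^2)

/-!
Each boost `Ω_{0k} = x_k∂_t + t∂_k` satisfies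
`t ∂_k Ω_{0k}w - x_k ∂_t Ω_{0k}w = t ∂_t w + t² ∂_k²w - x_k² ∂_t²w - x_k ∂_k w`.
Summing over `k` and adding `t² □w` gives
`(t² - r²) ∂_t²w = t² □w + Σ_k (t ∂_k Ω_{0k}w - x_k ∂_t Ω_{0k}w) - 3t ∂_t w + Σ_k x_k ∂_k w`,
whose right-hand side has coefficients bounded by `t + r`. Dividing by `t + r` bounds
`|t - r| |∂_t²w|`; since `⟨t - r⟩ ≤ 1 + |t - r|`, what remains is `|∂_t²w|`, which is
`|∂_t Γ w|` for `Γ = ∂_t`.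
-/

lemma abs_mul_le_of_abs_le {c a R S : ℝ} (hc : |c| ≤ R) (ha : |a| ≤ S) : |c * a| ≤ R * S :=
  abs_mul c a ▸ mul_le_mul hc ha (abs_nonneg a) ((abs_nonneg c).trans hc)

lemma abs_sum_le_of_abs_le {ι : Type*} (s : Finset ι) {f : ι → ℝ} {B : ℝ}
    (hf : ∀ i ∈ s, |f i| ≤ B) : |∑ i ∈ s, f i| ≤ s.card * B :=
  (Finset.abs_sum_le_sum_abs f s).trans ((Finset.sum_le_sum hf).trans_eq (by simp))

lemma sqrt_one_add_sq_le (q : ℝ) : √(1 + q ^ 2) ≤ 1 + |q| :=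
  Real.sqrt_le_iff.2 ⟨by positivity, by nlinarith [sq_abs q, abs_nonneg q]⟩

section PartialDerivatives

variable {n : ℕ} {w f g : (Fin n → ℝ) → ℝ}

lemma differentiable_pd (hw : ContDiff ℝ 2 w) (i : Fin n) : Differentiable ℝ (pd i w) :=
  ((hw.fderiv_right (m := 1) (by norm_num)).clm_apply contDiff_const).differentiable one_ne_zero

lemma pd_pd_comm (hw : ContDiff ℝ 2 w) (i j : Fin n) (z : Fin n → ℝ) :
    pd i (pd j w) z = pd j (pd i w) z := by
  have hw' : DifferentiableAt ℝ (fderiv ℝ w) z :=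
    (hw.fderiv_right (m := 1) (by norm_num)).differentiable one_ne_zero z
  have hpd : ∀ k l : Fin n, pd k (pd l w) z =
      fderiv ℝ (fderiv ℝ w) z (Pi.single k 1) (Pi.single l 1) := fun k l => by
    show fderiv ℝ (fun y => fderiv ℝ w y (Pi.single l 1)) z (Pi.single k 1) = _
    simp [fderiv_clm_apply hw' (differentiableAt_const _)]
  rw [hpd, hpd, (hw.contDiffAt.isSymmSndFDerivAt (by simp)).eq]

lemma pd_add {z : Fin n → ℝ} (hf : DifferentiableAt ℝ f z) (hg : DifferentiableAt ℝ g z)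
    (i : Fin n) : pd i (fun y => f y + g y) z = pd i f z + pd i g z := by
  simp [pd, fderiv_fun_add hf hg]

lemma pd_coord_mul {z : Fin n → ℝ} (hg : DifferentiableAt ℝ g z) (i a : Fin n) :
    pd i (fun y => y a * g y) z = (if a = i then 1 else 0) * g z + z a * pd i g z := by
  have hproj : HasFDerivAt (fun y : Fin n → ℝ => y a) (ContinuousLinearMap.proj a) z :=
    hasFDerivAt_apply (𝕜 := ℝ) a z
  simp [pd, fderiv_fun_mul hproj.differentiableAt hg, hproj.fderiv, Pi.single_apply]
  ring

end PartialDerivatives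

section Boosts

variable {n : ℕ} {w : (Fin n → ℝ) → ℝ}

def boost (i j : Fin n) (w : (Fin n → ℝ) → ℝ) : (Fin n → ℝ) → ℝ :=
  fun y => y j * pd i w y + y i * pd j w y

lemma pd_boost (hw : ContDiff ℝ 2 w) (i j k : Fin n) (z : Fin n → ℝ) :
    pd k (boost i j w) z =
      (if j = k then 1 else 0) * pd i w z + z j * pd k (pd i w) z
        + ((if i = k then 1 else 0) * pd j w z + z i * pd k (pd j w) z) := by
  have hdiff : ∀ a b : Fin n, DifferentiableAt ℝ (fun y => y a * pd b w y) z := fun a b =>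
    (hasFDerivAt_apply (𝕜 := ℝ) a z).differentiableAt.mul (differentiable_pd hw b z)
  unfold boost
  rw [pd_add (hdiff j i) (hdiff i j), pd_coord_mul (differentiable_pd hw i z),
    pd_coord_mul (differentiable_pd hw j z)]

lemma boost_identity (hw : ContDiff ℝ 2 w) {i j : Fin n} (hij : i ≠ j) (z : Fin n → ℝ) :
    z i * pd j (boost i j w) z - z j * pd i (boost i j w) z =
      z i * pd i w z + z i ^ 2 * pd j (pd j w) z - z j ^ 2 * pd i (pd i w) z
        - z j * pd j w z := by
  rw [pd_boost hw, pd_boost hw, pd_pd_comm hw j i]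
  simp only [hij, hij.symm, if_true, if_false]
  ring

end Boosts

lemma gammaField_boost (k : Fin 3) (w : (Fin 4 → ℝ) → ℝ) :
    GammaField ⟨k + 7, by omega⟩ w = boost 0 k.succ w := by
  fin_cases k <;> rfl

lemma wave_boost_identity {w : (Fin 4 → ℝ) → ℝ} (hw : ContDiff ℝ 2 w) (z : Fin 4 → ℝ) :
    (z 0 ^ 2 - rad z ^ 2) * pd 0 (pd 0 w) z =
      z 0 ^ 2 * Box w z
        + ∑ k : Fin 3,
            (z 0 * pd k.succ (boost 0 k.succ w) z - z k.succ * pd 0 (boost 0 k.succ w) z)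
        - 3 * (z 0 * pd 0 w z) + ∑ k : Fin 3, z k.succ * pd k.succ w z := by
  have hr : rad z ^ 2 = z 1 ^ 2 + z 2 ^ 2 + z 3 ^ 2 := Real.sq_sqrt (by positivity)
  have h1 := boost_identity hw (show (0 : Fin 4) ≠ 1 by decide) z
  have h2 := boost_identity hw (show (0 : Fin 4) ≠ 2 by decide) z
  have h3 := boost_identity hw (show (0 : Fin 4) ≠ 3 by decide) z
  simp only [Fin.sum_univ_three, Box]
  simp only [Fin.succ_zero_eq_one, Fin.succ_one_eq_two, show (2 : Fin 3).succ = 3 from rfl]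
  rw [hr]
  linear_combination -(h1 + h2 + h3)

/-- The sum `Σ_{|α| ≤ 1} |∂ Γ^α w|` at a point. -/
def gammaNorm (w : (Fin 4 → ℝ) → ℝ) (z : Fin 4 → ℝ) : ℝ :=
  ∑ m ∈ Finset.range 2, ∑ σ : Fin m → Fin 10, ∑ i : Fin 4,
    |pd i (opIter GammaField (List.ofFn σ) w) z|

section GammaNorm

variable (w : (Fin 4 → ℝ) → ℝ) (z : Fin 4 → ℝ)

lemma abs_pd_opIter_le_gammaNorm {m : ℕ} (hm : m < 2) (σ : Fin m → Fin 10) (i : Fin 4) :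
    |pd i (opIter GammaField (List.ofFn σ) w) z| ≤ gammaNorm w z := by
  have hnonneg : ∀ m (σ : Fin m → Fin 10),
      0 ≤ ∑ i : Fin 4, |pd i (opIter GammaField (List.ofFn σ) w) z| :=
    fun _ _ => Finset.sum_nonneg fun _ _ => abs_nonneg _
  calc |pd i (opIter GammaField (List.ofFn σ) w) z|
      ≤ ∑ i : Fin 4, |pd i (opIter GammaField (List.ofFn σ) w) z| :=
        Finset.single_le_sum (f := fun i => |pd i (opIter GammaField (List.ofFn σ) w) z|)
          (fun _ _ => abs_nonneg _) (Finset.mem_univ i)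
    _ ≤ ∑ σ : Fin m → Fin 10, ∑ i : Fin 4, |pd i (opIter GammaField (List.ofFn σ) w) z| :=
        Finset.single_le_sum (f := fun σ : Fin m → Fin 10 => ∑ i : Fin 4,
            |pd i (opIter GammaField (List.ofFn σ) w) z|) (fun σ _ => hnonneg m σ)
          (Finset.mem_univ σ)
    _ ≤ gammaNorm w z :=
        Finset.single_le_sum (f := fun m => ∑ σ : Fin m → Fin 10, ∑ i : Fin 4,
            |pd i (opIter GammaField (List.ofFn σ) w) z|)
          (fun m _ => Finset.sum_nonneg fun σ _ => hnonneg m σ) (Finset.mem_range.2 hm)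

lemma abs_pd_le_gammaNorm (i : Fin 4) : |pd i w z| ≤ gammaNorm w z :=
  abs_pd_opIter_le_gammaNorm w z (by norm_num) ![] i

lemma abs_pd_gammaField_le_gammaNorm (k : Fin 10) (i : Fin 4) :
    |pd i (GammaField k w) z| ≤ gammaNorm w z :=
  abs_pd_opIter_le_gammaNorm w z (by norm_num) ![k] i

lemma abs_pd_boost_le_gammaNorm (k : Fin 3) (i : Fin 4) :
    |pd i (boost 0 k.succ w) z| ≤ gammaNorm w z := by
  rw [← gammaField_boost]
  exact abs_pd_gammaField_le_gammaNorm w z _ i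

lemma gammaNorm_nonneg : 0 ≤ gammaNorm w z :=
  (abs_nonneg _).trans (abs_pd_le_gammaNorm w z 0)

end GammaNorm

lemma abs_coord_succ_le_rad (z : Fin 4 → ℝ) (k : Fin 3) : |z k.succ| ≤ rad z := by
  refine Real.abs_le_sqrt ?_
  fin_cases k <;>
    simp only [Fin.zero_eta, Fin.mk_one, Fin.reduceFinMk, Fin.succ_zero_eq_one,
      Fin.succ_one_eq_two, Fin.reduceSucc, Fin.isValue] <;>
    nlinarith [sq_nonneg (z 1), sq_nonneg (z 2), sq_nonneg (z 3)]

lemma abs_sub_rad_mul_abs_pd_pd_le {w : (Fin 4 → ℝ) → ℝ} (hw : ContDiff ℝ 2 w)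
    (z : Fin 4 → ℝ) (ht : 0 ≤ z 0) :
    |z 0 - rad z| * |pd 0 (pd 0 w) z| ≤ z 0 * |Box w z| + 12 * gammaNorm w z := by
  have hId := wave_boost_identity hw z
  set t := z 0
  set r := rad z
  set S := gammaNorm w z
  set B := ∑ k : Fin 3,
    (t * pd k.succ (boost 0 k.succ w) z - z k.succ * pd 0 (boost 0 k.succ w) z)
  set R := ∑ k : Fin 3, z k.succ * pd k.succ w z
  have hr : 0 ≤ r := Real.sqrt_nonneg _
  have hst : 0 ≤ t + r := by linarith
  have ht' : |t| ≤ t + r := by rw [abs_of_nonneg ht]; linarith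
  have hx : ∀ k : Fin 3, |z k.succ| ≤ t + r := fun k => by
    linarith [abs_coord_succ_le_rad z k]
  have hB : |B| ≤ 6 * ((t + r) * S) := by
    refine (abs_sum_le_of_abs_le (B := 2 * ((t + r) * S)) _ fun k _ => ?_).trans_eq
      (by rw [Finset.card_fin]; ring)
    refine (abs_sub _ _).trans ?_
    linarith [abs_mul_le_of_abs_le ht' (abs_pd_boost_le_gammaNorm w z k k.succ),
      abs_mul_le_of_abs_le (hx k) (abs_pd_boost_le_gammaNorm w z k 0)]
  have hT : |3 * (t * pd 0 w z)| ≤ 3 * ((t + r) * S) := by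
    rw [abs_mul, abs_of_pos three_pos]
    linarith [abs_mul_le_of_abs_le ht' (abs_pd_le_gammaNorm w z 0)]
  have hR : |R| ≤ 3 * ((t + r) * S) :=
    (abs_sum_le_of_abs_le (B := (t + r) * S) _ fun k _ =>
      abs_mul_le_of_abs_le (hx k) (abs_pd_le_gammaNorm w z k.succ)).trans_eq
      (by rw [Finset.card_fin]; norm_num)
  have hBox : |t ^ 2 * Box w z| ≤ (t + r) * (t * |Box w z|) := by
    rw [abs_mul, abs_of_nonneg (sq_nonneg t)]
    nlinarith [mul_nonneg (mul_nonneg hr ht) (abs_nonneg (Box w z))]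
  have hMain : (t + r) * (|t - r| * |pd 0 (pd 0 w) z|)
      ≤ (t + r) * (t * |Box w z| + 12 * S) :=
    calc (t + r) * (|t - r| * |pd 0 (pd 0 w) z|)
        = |t ^ 2 * Box w z + B - 3 * (t * pd 0 w z) + R| := by
          rw [← hId, show t ^ 2 - r ^ 2 = (t - r) * (t + r) by ring, abs_mul, abs_mul,
            abs_of_nonneg hst]
          ring
      _ ≤ |t ^ 2 * Box w z| + |B| + |3 * (t * pd 0 w z)| + |R| := by
          linarith [abs_add_le (t ^ 2 * Box w z + B - 3 * (t * pd 0 w z)) R,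
            abs_sub (t ^ 2 * Box w z + B) (3 * (t * pd 0 w z)), abs_add_le (t ^ 2 * Box w z) B]
      _ ≤ (t + r) * (t * |Box w z| + 12 * S) := by linarith
  rcases hst.eq_or_lt with hzero | hpos
  · have : t - r = 0 := by linarith
    rw [this, abs_zero, zero_mul]
    exact add_nonneg (mul_nonneg ht (abs_nonneg _)) (by linarith [gammaNorm_nonneg w z])
  · exact le_of_mul_le_mul_left hMain hpos

/-- Klainerman–Sideris type pointwise estimate: there is a constant `C` such
that for every `w ∈ C²(ℝ₊×ℝ³)`, every `t ≥ 0` and `x ∈ ℝ³`,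
`⟨t-r⟩ |∂_t² w(t,x)| ≤ C Σ_{|α|≤1} |∂Γ^α w(t,x)| + C t |□w(t,x)|`. -/
theorem stmt6 :
    ∃ C : ℝ, 0 < C ∧
      ∀ w : (Fin 4 → ℝ) → ℝ, ContDiff ℝ 2 w →
        ∀ t : ℝ, 0 ≤ t → ∀ x : Fin 3 → ℝ,
          Real.sqrt (1 + (t - Real.sqrt ((x 0)^2 + (x 1)^2 + (x 2)^2))^2) *
              |pd 0 (pd 0 w) (Fin.cons t x)| ≤
            C * (∑ n ∈ Finset.range 2, ∑ σ : Fin n → Fin 10, ∑ i : Fin 4,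
                  |pd i (opIter GammaField (List.ofFn σ) w) (Fin.cons t x)|) +
            C * t * |Box w (Fin.cons t x)| := by
  refine ⟨13, by norm_num, fun w hw t ht x => ?_⟩
  set z : Fin 4 → ℝ := Fin.cons t x
  change √(1 + (z 0 - rad z) ^ 2) * |pd 0 (pd 0 w) z| ≤
    13 * gammaNorm w z + 13 * z 0 * |Box w z|
  have hWeighted := abs_sub_rad_mul_abs_pd_pd_le hw z ht
  have hTime : |pd 0 (pd 0 w) z| ≤ gammaNorm w z := abs_pd_gammaField_le_gammaNorm w z 0 0
  calc √(1 + (z 0 - rad z) ^ 2) * |pd 0 (pd 0 w) z|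
      ≤ (1 + |z 0 - rad z|) * |pd 0 (pd 0 w) z| :=
        mul_le_mul_of_nonneg_right (sqrt_one_add_sq_le _) (abs_nonneg _)
    _ ≤ 13 * gammaNorm w z + 13 * z 0 * |Box w z| := by
        linarith [mul_nonneg (show 0 ≤ z 0 from ht) (abs_nonneg (Box w z)), gammaNorm_nonneg w z]
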